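/- For every function f : [n] → [n], every subset S ⊆ [n], and every positive integer d, there exists a set A of at most d permutations of [n] such that for each r ∈ S, either some π ∈ A satisfies π(r) = f(r), or |S ∩ f⁻¹(f(r))| > d. -/

import Mathlib

/-!
Number the points of each fibre `S ∩ f⁻¹(y)` as `0, 1, 2, …` in increasing order. Points of `S`
carrying the same number lie in different fibres, so `f` is injective on each such level set and
extends to a permutation `πᵢ`. The permutations `π₀, …, π_{d-1}` cover every `r ∈ S` whose
fibre has at most `d` points, since the number of such an `r` is below `d`.
-/

open Finset

theorem Set.InjOn.exists_perm_eqOn {α : Type*} [Fintype α] {s : Set α} {f : α → α}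
    (hf : Set.InjOn f s) : ∃ π : Equiv.Perm α, Set.EqOn π f s := by
  classical
  obtain ⟨g, hg⟩ := Set.MapsTo.exists_equiv_extend_of_card_eq (t := Finset.univ)
    Finset.card_univ.symm (fun _ _ => by simp) hf
  exact ⟨g.trans (Equiv.subtypeUnivEquiv Finset.mem_univ), hg⟩

section FiberRank

variable {α β : Type*} [LinearOrder α] [DecidableEq β] (f : α → β) (S : Finset α)

def fiberRank (r : α) : ℕ := #{s ∈ S | f s = f r ∧ s < r}

variable {f S}

theorem fiberRank_lt_of_lt {r r' : α} (hr : r ∈ S) (hf : f r = f r') (hlt : r < r') :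
    fiberRank f S r < fiberRank f S r' := by
  refine card_lt_card <| (ssubset_iff_of_subset fun s hs => ?_).2 ⟨r, ?_, by simp⟩
  · simp only [mem_filter] at hs ⊢
    exact ⟨hs.1, hs.2.1.trans hf, hs.2.2.trans hlt⟩
  · exact mem_filter.2 ⟨hr, hf, hlt⟩

theorem fiberRank_lt_card {r : α} (hr : r ∈ S) :
    fiberRank f S r < #{s ∈ S | f s = f r} := by
  refine card_lt_card <| (ssubset_iff_of_subset fun s hs => ?_).2
    ⟨r, mem_filter.2 ⟨hr, rfl⟩, by simp⟩
  simp only [mem_filter] at hs ⊢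
  exact ⟨hs.1, hs.2.1⟩

theorem injOn_filter_fiberRank_eq (i : ℕ) :
    Set.InjOn f {r ∈ S | fiberRank f S r = i} := by
  intro r hr r' hr' hf
  by_contra hne
  rcases lt_or_gt_of_ne hne with hlt | hlt
  · exact (fiberRank_lt_of_lt hr.1 hf hlt).ne (hr.2.trans hr'.2.symm)
  · exact (fiberRank_lt_of_lt hr'.1 hf.symm hlt).ne (hr'.2.trans hr.2.symm)

end FiberRank

theorem perm_s_cover_general (n d : ℕ) (f : Fin n → Fin n) (S : Finset (Fin n)) :
    ∃ A : Finset (Equiv.Perm (Fin n)), A.card ≤ d ∧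
      ∀ r ∈ S, (∃ π ∈ A, π r = f r) ∨
        d < (S.filter fun s => f s = f r).card := by
  choose π hπ using fun i => (injOn_filter_fiberRank_eq (f := f) (S := S) i).exists_perm_eqOn
  refine ⟨(range d).image π, card_image_le.trans (card_range d).le, fun r hr => ?_⟩
  by_cases hbig : d < #{s ∈ S | f s = f r}
  · exact Or.inr hbig
  refine Or.inl ⟨π (fiberRank f S r), mem_image_of_mem π (mem_range.2 ?_), ?_⟩
  · exact (fiberRank_lt_card hr).trans_le (not_lt.1 hbig)
  · exact hπ _ ⟨hr, rfl⟩

/-- For every `f : [n] → [n]`, `S ⊆ [n]` and positive `d`, there is a set of at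
most `d` permutations of `[n]` that `(S,d)`-covers `f`. -/
theorem perm_s_cover (n d : ℕ) (hd : 0 < d) (f : Fin n → Fin n) (S : Finset (Fin n)) :
    ∃ A : Finset (Equiv.Perm (Fin n)), A.card ≤ d ∧
      ∀ r ∈ S, (∃ π ∈ A, π r = f r) ∨
        d < (S.filter fun s => f s = f r).card :=
  perm_s_cover_general n d f S
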